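/- arXiv:1810.11304 — 6 statements merged into one kernel-verified Lean document; each statement's English description precedes it below -/
import Mathlib

section
/- Let p be a prime, K = F_p((t)), and U_1 = 1 + tF_p[[t]] the group of principal units. For j ≥ 1 set E_j = 1 + t^j ∈ U_1. Then the family {E_j : j ≥ 1, p ∤ j} is a topological ℤ_p-basis of U_1; in particular, every element of U_1 can be written uniquely as a convergent product ∏_{p∤j} E_j^{n_j} with n_j ∈ ℤ_p. -/
/-!
Write `E m = 1 + X ^ m`. Modulo `X ^ (m + 1)`, multiplying a unit `≡ 1 mod X` by `E m ^ c` only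
adds `c` to the coefficient of `X ^ m`; hence every `u` with constant coefficient `1` is, modulo
every `X ^ (M + 1)`, a product `∏_{m ≤ M} E m ^ g m` with digits `g m < p`, and these digits are
unique (they are found greedily, coefficient by coefficient).

Every `m ≥ 1` is `p ^ i * j` with `p ∤ j` in exactly one way, and in characteristic `p`,
`E j ^ p ^ i = E (p ^ i * j)`. Expanding `a_j < p ^ N` in base `p` therefore rewrites
`∏_{p ∤ j ≤ N} E j ^ a_j` as a digit product in which the digit of `E (p ^ i * j)` is the
`i`-th base-`p` digit of `a_j`. By uniqueness of digits, the exponents must satisfy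
`n_j ≡ ∑_{i < K} g (p ^ i * j) p ^ i mod p ^ K` for all `K`; these congruences determine a
unique `n_j ∈ ℤ_p`, and conversely they make the partial products converge to `u`.
-/

open PowerSeries Finset

instance PowerSeries.charP {R : Type*} [Semiring R] (p : ℕ) [CharP R p] : CharP R⟦X⟧ p :=
  charP_of_injective_ringHom C_injective p

section CommRing

variable {R : Type*} [CommRing R]

theorem one_add_pow_smodEq (x : R) (c : ℕ) :
    (1 + x) ^ c ≡ 1 + c * x [SMOD Ideal.span {x ^ 2}] := by
  rw [SModEq.sub_mem, Ideal.mem_span_singleton]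
  induction c with
  | zero => simp
  | succ c ih =>
    obtain ⟨q, hq⟩ := ih
    exact ⟨q * (1 + x) + c, by push_cast; linear_combination (1 + x) * hq⟩

theorem one_add_X_pow_pow_smodEq_one {d m : ℕ} (h : d ≤ m) (c : ℕ) :
    (1 + X ^ m : R⟦X⟧) ^ c ≡ 1 [SMOD Ideal.span {X ^ d}] := by
  have h₁ : (1 + X ^ m : R⟦X⟧) ≡ 1 [SMOD Ideal.span {X ^ d}] := by
    rw [SModEq.sub_mem, add_sub_cancel_left, Ideal.mem_span_singleton]
    exact pow_dvd_pow X h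
  simpa using h₁.pow c

theorem mul_one_add_X_pow_pow_smodEq {P : R⟦X⟧} (hP : P ≡ 1 [SMOD Ideal.span {X}]) {m : ℕ}
    (hm : 1 ≤ m) (c : ℕ) :
    P * (1 + X ^ m) ^ c ≡ P + (c : R⟦X⟧) * X ^ m [SMOD Ideal.span {X ^ (m + 1)}] := by
  rw [SModEq.sub_mem, Ideal.mem_span_singleton] at hP ⊢
  have h₁ : X ^ (m + 1) ∣ (1 + X ^ m : R⟦X⟧) ^ c - (1 + (c : R⟦X⟧) * X ^ m) := by
    refine (pow_dvd_pow X (by omega : m + 1 ≤ m * 2)).trans ?_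
    rw [pow_mul, ← Ideal.mem_span_singleton, ← SModEq.sub_mem]
    exact one_add_pow_smodEq _ c
  have h₂ : X ^ (m + 1) ∣ (P - 1) * ((c : R⟦X⟧) * X ^ m) := by
    rw [pow_succ', mul_left_comm]
    exact dvd_mul_of_dvd_right (mul_dvd_mul hP dvd_rfl) _
  rw [show P * (1 + X ^ m) ^ c - (P + (c : R⟦X⟧) * X ^ m)
      = P * ((1 + X ^ m) ^ c - (1 + (c : R⟦X⟧) * X ^ m)) + (P - 1) * ((c : R⟦X⟧) * X ^ m) by
    ring]
  exact dvd_add (h₁.mul_left P) h₂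

theorem smodEq_C_coeff_mul_X_pow {f : R⟦X⟧} {m : ℕ} (hf : f ≡ 0 [SMOD Ideal.span {X ^ m}]) :
    f ≡ C (coeff m f) * X ^ m [SMOD Ideal.span {X ^ (m + 1)}] := by
  rw [SModEq.sub_mem, sub_zero, Ideal.mem_span_singleton, X_pow_dvd_iff] at hf
  rw [SModEq.sub_mem, Ideal.mem_span_singleton, X_pow_dvd_iff]
  intro k hk
  rw [map_sub, coeff_C_mul_X_pow]
  rcases Nat.lt_or_ge k m with hkm | hkm
  · rw [hf k hkm, if_neg hkm.ne, sub_zero]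
  · rw [if_pos (by omega), show k = m by omega, sub_self]

theorem coeff_eq_of_smodEq {f g : R⟦X⟧} {d : ℕ} (h : f ≡ g [SMOD Ideal.span {X ^ d}])
    {k : ℕ} (hk : k < d) : coeff k f = coeff k g := by
  rw [SModEq.sub_mem, Ideal.mem_span_singleton, X_pow_dvd_iff] at h
  exact sub_eq_zero.1 (by simpa using h k hk)

theorem coeff_mul_one_add_X_pow_pow {P : R⟦X⟧} {m : ℕ}
    (hP : P ≡ 1 [SMOD Ideal.span {X ^ (m + 1)}]) (hm : 1 ≤ m) (c : ℕ) :
    coeff m (P * (1 + X ^ m) ^ c) = (c : R) := by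
  have hP₁ : P ≡ 1 [SMOD Ideal.span {X}] :=
    hP.mono (Ideal.span_singleton_le_span_singleton.2 (dvd_pow_self X (by omega)))
  have h := (mul_one_add_X_pow_pow_smodEq hP₁ hm c).trans (hP.add SModEq.rfl)
  rw [coeff_eq_of_smodEq h (lt_add_one m), map_add, ← map_natCast C, coeff_C_mul_X_pow,
    if_pos rfl, coeff_one, if_neg (by omega), zero_add]

theorem isUnit_one_add_X_pow_pow {m : ℕ} (hm : 1 ≤ m) (c : ℕ) :
    IsUnit ((1 + X ^ m : R⟦X⟧) ^ c) :=
  (isUnit_iff_constantCoeff.2 (by simp [zero_pow (show m ≠ 0 by omega)])).pow c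

theorem prod_one_add_X_pow_pow_smodEq_of_subset {s t : Finset ℕ} (hst : s ⊆ t) {d : ℕ}
    (hd : ∀ m ∈ t \ s, d ≤ m) (g : ℕ → ℕ) :
    ∏ m ∈ t, (1 + X ^ m : R⟦X⟧) ^ g m ≡ ∏ m ∈ s, (1 + X ^ m) ^ g m
      [SMOD Ideal.span {X ^ d}] := by
  rw [← prod_sdiff hst]
  have h : ∏ m ∈ t \ s, (1 + X ^ m : R⟦X⟧) ^ g m ≡ 1 [SMOD Ideal.span {X ^ d}] := by
    simpa using SModEq.prod fun m hm => one_add_X_pow_pow_smodEq_one (R := R) (hd m hm) (g m)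
  simpa using h.mul (SModEq.refl (∏ m ∈ s, (1 + X ^ m : R⟦X⟧) ^ g m))

end CommRing

theorem eq_of_prod_one_add_X_pow_pow_smodEq {R : Type*} [CommRing R] {p : ℕ} [CharP R p]
    {ι : Type*} [DecidableEq ι] {s : Finset ι} {w δ δ' : ι → ℕ} {D : ℕ}
    (h : ∏ x ∈ s, (1 + X ^ w x : R⟦X⟧) ^ δ x ≡ ∏ x ∈ s, (1 + X ^ w x) ^ δ' x
      [SMOD Ideal.span {X ^ D}])
    (hw : Set.InjOn w s) (hw₁ : ∀ x ∈ s, 1 ≤ w x) (hδ : ∀ x, δ x < p) (hδ' : ∀ x, δ' x < p) :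
    ∀ x ∈ s, w x < D → δ x = δ' x := by
  induction s using Finset.induction_on_min_value w with
  | empty => simp
  | insert a s ha hmin ih =>
    have hwa := hw₁ a (mem_insert_self a s)
    have hlt : ∀ x ∈ s, w a < w x := by
      intro x hx
      refine (hmin x hx).lt_of_ne fun he => ha ?_
      rwa [hw (mem_coe.2 (mem_insert_self a s)) (mem_coe.2 (mem_insert_of_mem hx)) he]
    rw [prod_insert ha, prod_insert ha, mul_comm, mul_comm ((1 + X ^ w a) ^ δ' a)] at h
    have htail (e : ι → ℕ) :
        ∏ x ∈ s, (1 + X ^ w x : R⟦X⟧) ^ e x ≡ 1 [SMOD Ideal.span {X ^ (w a + 1)}] := by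
      have := SModEq.prod (s := s) (y := fun _ => 1) fun x hx =>
        one_add_X_pow_pow_smodEq_one (R := R) (hlt x hx) (e x)
      rwa [prod_const_one] at this
    have ha_eq (haD : w a < D) : δ a = δ' a := by
      have hc := coeff_eq_of_smodEq h haD
      rw [coeff_mul_one_add_X_pow_pow (htail δ) hwa,
        coeff_mul_one_add_X_pow_pow (htail δ') hwa, CharP.natCast_eq_natCast R p] at hc
      exact hc.eq_of_lt_of_lt (hδ a) (hδ' a)
    intro x hx hxD
    rcases mem_insert.1 hx with rfl | hx
    · exact ha_eq hxD
    refine ih ?_ (hw.mono (by simp)) (fun y hy => hw₁ y (mem_insert_of_mem hy)) x hx hxD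
    rw [ha_eq ((hmin x hx).trans_lt hxD), SModEq.sub_mem, ← sub_mul, Ideal.mem_span_singleton,
      (isUnit_one_add_X_pow_pow hwa _).dvd_mul_right] at h
    rwa [SModEq.sub_mem, Ideal.mem_span_singleton]

section Greedy

variable {p : ℕ} [NeZero p]

noncomputable def greedyProd (u : (ZMod p)⟦X⟧) : ℕ → (ZMod p)⟦X⟧
  | 0 => 1
  | m + 1 => greedyProd u m * (1 + X ^ (m + 1)) ^ (coeff (m + 1) (u - greedyProd u m)).val

theorem smodEq_greedyProd {u : (ZMod p)⟦X⟧} (hu : constantCoeff u = 1) (M : ℕ) :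
    u ≡ greedyProd u M [SMOD Ideal.span {X ^ (M + 1)}] := by
  have hu₁ : u ≡ 1 [SMOD Ideal.span {X}] := by
    rw [SModEq.sub_mem, Ideal.mem_span_singleton, X_dvd_iff, map_sub, hu, map_one, sub_self]
  induction M with
  | zero => simpa [greedyProd] using hu₁
  | succ M ih =>
    set P := greedyProd u M
    set c := coeff (M + 1) (u - P)
    have hP : P ≡ 1 [SMOD Ideal.span {X}] :=
      (ih.symm.mono (Ideal.span_singleton_le_span_singleton.2 (dvd_pow_self X (by omega)))).trans
        hu₁
    have h₁ : u - P ≡ C c * X ^ (M + 1) [SMOD Ideal.span {X ^ (M + 1 + 1)}] :=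
      smodEq_C_coeff_mul_X_pow (sub_smodEq_zero.2 ih)
    have h₂ := mul_one_add_X_pow_pow_smodEq hP (by omega : 1 ≤ M + 1) c.val
    rw [← map_natCast C, ZMod.natCast_zmod_val] at h₂
    show u ≡ P * (1 + X ^ (M + 1)) ^ c.val [SMOD _]
    calc u = P + (u - P) := by ring
      _ ≡ P + C c * X ^ (M + 1) [SMOD _] := SModEq.rfl.add h₁
      _ ≡ _ [SMOD _] := h₂.symm

theorem exists_smodEq_prod_one_add_X_pow_pow {u : (ZMod p)⟦X⟧} (hu : constantCoeff u = 1) :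
    ∃ g : ℕ → ℕ, (∀ m, g m < p) ∧
      ∀ M, u ≡ ∏ m ∈ Icc 1 M, (1 + X ^ m) ^ g m [SMOD Ideal.span {X ^ (M + 1)}] := by
  refine ⟨fun m => (coeff m (u - greedyProd u (m - 1))).val, fun m => ZMod.val_lt _,
    fun M => ?_⟩
  convert smodEq_greedyProd hu M using 2
  induction M with
  | zero => rfl
  | succ M ih => rw [prod_Icc_succ_top (by omega), ih]; rfl

end Greedy

theorem Nat.mod_pow_eq_sum (x b K : ℕ) :
    x % b ^ K = ∑ i ∈ range K, x / b ^ i % b * b ^ i := by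
  induction K with
  | zero => simp [Nat.mod_one]
  | succ K ih => rw [Nat.mod_pow_succ, ih, sum_range_succ, mul_comm (b ^ K)]

theorem Nat.pos_of_not_dvd {p j : ℕ} (hj : ¬ p ∣ j) : 0 < j :=
  Nat.pos_of_ne_zero (by rintro rfl; exact hj (dvd_zero p))

theorem PadicInt.exists_toZModPow_eq_sum {p : ℕ} [Fact p.Prime] (c : ℕ → ℕ) :
    ∃ x : ℤ_[p], ∀ K, toZModPow K x = ∑ i ∈ range K, c i * p ^ i := by
  let f (K : ℕ) : ℤ := ∑ i ∈ range K, c i * p ^ i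
  have hf (i : ℕ) : (p : ℤ) ^ i ∣ f (i + 1) - f i := by simp [f, sum_range_succ]
  refine ⟨ofIntSeq _ (isCauSeq_padicNorm_of_pow_dvd_sub f p hf), fun K => ?_⟩
  rw [toZModPow_ofIntSeq_of_pow_dvd_sub _ _ hf]
  simp [f]

section Frobenius

variable {R : Type*} [CommRing R] {p : ℕ} [Fact p.Prime] [CharP R p]

theorem one_add_X_pow_pow_char_pow (j k : ℕ) :
    (1 + X ^ j : R⟦X⟧) ^ p ^ k = 1 + X ^ (p ^ k * j) := by
  rw [add_pow_char_pow, one_pow, ← pow_mul, mul_comm]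

theorem one_add_X_pow_pow_smodEq_of_natCast_eq {a b N : ℕ} (h : (a : ZMod (p ^ N)) = b)
    (j : ℕ) : (1 + X ^ j : R⟦X⟧) ^ a ≡ (1 + X ^ j) ^ b [SMOD Ideal.span {X ^ (p ^ N * j)}] := by
  have hmod (a : ℕ) : (1 + X ^ j : R⟦X⟧) ^ a ≡ (1 + X ^ j) ^ (a % p ^ N)
      [SMOD Ideal.span {X ^ (p ^ N * j)}] := by
    conv_lhs => rw [← Nat.mod_add_div a (p ^ N), pow_add, pow_mul, one_add_X_pow_pow_char_pow]
    simpa using SModEq.rfl.mul (one_add_X_pow_pow_smodEq_one (R := R) le_rfl (a / p ^ N))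
  rw [ZMod.natCast_eq_natCast_iff'] at h
  exact (hmod a).trans (h ▸ (hmod b).symm)

theorem prod_one_add_X_pow_pow_sum (s : Finset ℕ) (N : ℕ) (e : ℕ → ℕ → ℕ) :
    ∏ j ∈ s, (1 + X ^ j : R⟦X⟧) ^ (∑ i ∈ range N, e j i * p ^ i) =
      ∏ x ∈ s ×ˢ range N, (1 + X ^ (p ^ x.2 * x.1)) ^ e x.1 x.2 := by
  rw [prod_product]
  refine prod_congr rfl fun j _ => ?_
  rw [← prod_pow_eq_pow_sum]
  refine prod_congr rfl fun i _ => ?_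
  rw [mul_comm, pow_mul, one_add_X_pow_pow_char_pow]

theorem prod_one_add_X_pow_pow_eq_prod_digits {s : Finset ℕ} {N : ℕ} {a : ℕ → ℕ}
    (ha : ∀ j, a j < p ^ N) :
    ∏ j ∈ s, (1 + X ^ j : R⟦X⟧) ^ a j =
      ∏ x ∈ s ×ˢ range N, (1 + X ^ (p ^ x.2 * x.1)) ^ (a x.1 / p ^ x.2 % p) := by
  rw [← prod_one_add_X_pow_pow_sum s N fun j i => a j / p ^ i % p]
  refine prod_congr rfl fun j _ => ?_
  rw [← Nat.mod_pow_eq_sum, Nat.mod_eq_of_lt (ha j)]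

end Frobenius

section Reindex

variable {p : ℕ} [Fact p.Prime]

theorem one_le_pow_mul_of_not_dvd {j : ℕ} (hj : ¬ p ∣ j) (i : ℕ) : 1 ≤ p ^ i * j :=
  Nat.mul_pos (pow_pos (Fact.out : p.Prime).pos i) (Nat.pos_of_not_dvd hj)

theorem injOn_pow_mul : Set.InjOn (fun x : ℕ × ℕ => p ^ x.2 * x.1) {x | ¬ p ∣ x.1} := by
  have hp : p.Prime := Fact.out
  rintro ⟨j, i⟩ (hj : ¬ p ∣ j) ⟨j', i'⟩ (hj' : ¬ p ∣ j') (h : p ^ i * j = p ^ i' * j')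
  have hjj : j = j' := by
    simpa [Nat.ordCompl_pow_mul_of_not_dvd _ hp hj, Nat.ordCompl_pow_mul_of_not_dvd _ hp hj']
      using congrArg (fun m => ordCompl[p] m) h
  subst hjj
  have hii : p ^ i = p ^ i' := Nat.eq_of_mul_eq_mul_right (Nat.pos_of_not_dvd hj) h
  simp [Nat.pow_right_injective hp.two_le hii]

variable {R : Type*} [CommRing R]

theorem prod_pow_mul_smodEq_prod_Icc (g : ℕ → ℕ) (N : ℕ) :
    ∏ x ∈ {j ∈ range (N + 1) | ¬ p ∣ j} ×ˢ range N,
        (1 + X ^ (p ^ x.2 * x.1) : R⟦X⟧) ^ g (p ^ x.2 * x.1)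
      ≡ ∏ m ∈ Icc 1 N, (1 + X ^ m) ^ g m [SMOD Ideal.span {X ^ (N + 1)}] := by
  have hp : p.Prime := Fact.out
  set T := {j ∈ range (N + 1) | ¬ p ∣ j} ×ˢ range N
  have hT : ∀ x ∈ T, ¬ p ∣ x.1 := fun x hx => (mem_filter.1 (mem_product.1 hx).1).2
  rw [← prod_image (f := fun m => (1 + X ^ m : R⟦X⟧) ^ g m) (injOn_pow_mul.mono hT)]
  refine prod_one_add_X_pow_pow_smodEq_of_subset (fun m hm => ?_) (fun m hm => ?_) g
  · obtain ⟨hm₁, hmN⟩ := mem_Icc.1 hm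
    have hm₀ : m ≠ 0 := by omega
    have h₁ := Nat.ordCompl_le m p
    have h₂ := Nat.ordProj_le p hm₀
    have h₃ : m.factorization p < p ^ m.factorization p := Nat.lt_pow_self hp.one_lt
    refine mem_image.2 ⟨(ordCompl[p] m, m.factorization p), ?_,
      Nat.ordProj_mul_ordCompl_eq_self m p⟩
    simp only [T, mem_product, mem_filter, mem_range]
    exact ⟨⟨by omega, Nat.not_dvd_ordCompl hp hm₀⟩, by omega⟩
  · obtain ⟨hmT, hmI⟩ := mem_sdiff.1 hm
    obtain ⟨x, hx, rfl⟩ := mem_image.1 hmT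
    simp only [mem_Icc, not_and, not_le] at hmI
    exact hmI (one_le_pow_mul_of_not_dvd (hT x hx) x.2)

end Reindex

section Expansion

variable {R : Type*} [CommRing R] {p : ℕ} [Fact p.Prime] [CharP R p]

theorem X_pow_succ_dvd_prod_appr_sub {u : R⟦X⟧} {g : ℕ → ℕ} {N : ℕ}
    (hu : u ≡ ∏ m ∈ Icc 1 N, (1 + X ^ m) ^ g m [SMOD Ideal.span {X ^ (N + 1)}])
    {n : ℕ → ℤ_[p]}
    (hn : ∀ j, ¬ p ∣ j →
      PadicInt.toZModPow N (n j) = ∑ i ∈ range N, g (p ^ i * j) * p ^ i) :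
    X ^ (N + 1) ∣
      ∏ j ∈ {j ∈ range (N + 1) | ¬ p ∣ j}, (1 + X ^ j : R⟦X⟧) ^ (n j).appr N - u := by
  have hp : p.Prime := Fact.out
  rw [← Ideal.mem_span_singleton, ← SModEq.sub_mem]
  calc ∏ j ∈ {j ∈ range (N + 1) | ¬ p ∣ j}, (1 + X ^ j : R⟦X⟧) ^ (n j).appr N
      ≡ ∏ j ∈ {j ∈ range (N + 1) | ¬ p ∣ j},
          (1 + X ^ j) ^ (∑ i ∈ range N, g (p ^ i * j) * p ^ i)
        [SMOD Ideal.span {X ^ (N + 1)}] := by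
        refine SModEq.prod fun j hj => ?_
        have hj := (mem_filter.1 hj).2
        refine (one_add_X_pow_pow_smodEq_of_natCast_eq (N := N) ?_ j).mono
          (Ideal.span_singleton_le_span_singleton.2 (pow_dvd_pow X ?_))
        · exact_mod_cast hn j hj
        · have := Nat.le_mul_of_pos_right (p ^ N) (Nat.pos_of_not_dvd hj)
          have := Nat.lt_pow_self (n := N) hp.one_lt
          omega
    _ = ∏ x ∈ {j ∈ range (N + 1) | ¬ p ∣ j} ×ˢ range N,
          (1 + X ^ (p ^ x.2 * x.1)) ^ g (p ^ x.2 * x.1) := prod_one_add_X_pow_pow_sum _ _ _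
    _ ≡ ∏ m ∈ Icc 1 N, (1 + X ^ m) ^ g m [SMOD _] := prod_pow_mul_smodEq_prod_Icc g N
    _ ≡ u [SMOD _] := hu.symm

theorem digit_eq_of_X_pow_dvd_prod_sub {u : R⟦X⟧} {g : ℕ → ℕ} (hg : ∀ m, g m < p) {N : ℕ}
    (hu : u ≡ ∏ m ∈ Icc 1 N, (1 + X ^ m) ^ g m [SMOD Ideal.span {X ^ (N + 1)}])
    {a : ℕ → ℕ} (ha : ∀ j, a j < p ^ N) {d : ℕ} (hd : d ≤ N + 1)
    (h : X ^ d ∣ ∏ j ∈ {j ∈ range (N + 1) | ¬ p ∣ j}, (1 + X ^ j : R⟦X⟧) ^ a j - u)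
    {j i : ℕ} (hj : ¬ p ∣ j) (hiN : i < N) (hid : p ^ i * j < d) :
    a j / p ^ i % p = g (p ^ i * j) := by
  have hp : p.Prime := Fact.out
  set T := {j ∈ range (N + 1) | ¬ p ∣ j} ×ˢ range N
  have hT : ∀ x ∈ T, ¬ p ∣ x.1 := fun x hx => (mem_filter.1 (mem_product.1 hx).1).2
  rw [← Ideal.mem_span_singleton, ← SModEq.sub_mem, prod_one_add_X_pow_pow_eq_prod_digits ha]
    at h
  have hgT := (hu.trans (prod_pow_mul_smodEq_prod_Icc (p := p) g N).symm).mono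
    (Ideal.span_singleton_le_span_singleton.2 (pow_dvd_pow X hd))
  refine eq_of_prod_one_add_X_pow_pow_smodEq (h.trans hgT) (injOn_pow_mul.mono hT)
    (fun x hx => one_le_pow_mul_of_not_dvd (hT x hx) x.2) (fun x => Nat.mod_lt _ hp.pos)
    (fun x => hg _) (j, i) ?_ hid
  have := Nat.le_mul_of_pos_left j (pow_pos hp.pos i)
  simp only [mem_product, mem_filter, mem_range]
  exact ⟨⟨by omega, hj⟩, hiN⟩

theorem toZModPow_eq_sum_of_forall_X_pow_dvd {u : R⟦X⟧} {g : ℕ → ℕ} (hg : ∀ m, g m < p)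
    (hu : ∀ M, u ≡ ∏ m ∈ Icc 1 M, (1 + X ^ m) ^ g m [SMOD Ideal.span {X ^ (M + 1)}])
    {n : ℕ → ℤ_[p]} (hn : ∀ d : ℕ, ∃ N₀ : ℕ, ∀ N ≥ N₀,
      X ^ d ∣ ∏ j ∈ {j ∈ range (N + 1) | ¬ p ∣ j}, (1 + X ^ j : R⟦X⟧) ^ (n j).appr N - u)
    {j : ℕ} (hj : ¬ p ∣ j) (K : ℕ) :
    PadicInt.toZModPow K (n j) = ∑ i ∈ range K, g (p ^ i * j) * p ^ i := by
  have hp : p.Prime := Fact.out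
  obtain ⟨N₀, hN₀⟩ := hn (p ^ K * j)
  set N := N₀ + p ^ K * j
  have hj₀ := Nat.pos_of_not_dvd hj
  have hKj : p ^ K ≤ p ^ K * j := Nat.le_mul_of_pos_right _ hj₀
  have hKN : K ≤ N := (Nat.lt_pow_self hp.one_lt).le.trans (by omega)
  have hdig (i : ℕ) (hi : i < K) : (n j).appr N / p ^ i % p = g (p ^ i * j) :=
    digit_eq_of_X_pow_dvd_prod_sub hg (hu N) (fun j => PadicInt.appr_lt (n j) N)
      (by omega) (hN₀ N (by omega)) hj (by omega)
      (Nat.mul_lt_mul_of_pos_right (Nat.pow_lt_pow_right hp.one_lt hi) hj₀)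
  calc PadicInt.toZModPow K (n j) = ((n j).appr N : ZMod (p ^ K)) := by
        rw [← PadicInt.zmod_cast_comp_toZModPow K N hKN, RingHom.comp_apply,
          ZMod.castHom_apply]
        exact ZMod.cast_natCast (pow_dvd_pow p hKN) _
    _ = (((n j).appr N % p ^ K : ℕ) : ZMod (p ^ K)) := (ZMod.natCast_mod _ _).symm
    _ = _ := by
      rw [Nat.mod_pow_eq_sum, sum_congr rfl fun i hi => by rw [hdig i (mem_range.1 hi)]]

end Expansion

/-- The family `{E_j = 1 + t^j : p ∤ j}` is a topological `ℤ_p`-basis of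
`U₁ = 1 + tF_p[[t]]`: every power series with constant term `1` is, in a unique way, the
`t`-adic limit of the partial products `∏_{j ≤ N, p ∤ j} (1 + t^j)^{n_j mod p^N}`
for exponents `n_j ∈ ℤ_p` (here `(n j).appr N` is the approximation of `n_j` mod `p^N`). -/
theorem principal_units_topological_basis (p : ℕ) [Fact p.Prime]
    (u : PowerSeries (ZMod p)) (hu : constantCoeff u = 1) :
    ∃! n : ℕ → ℤ_[p], (∀ j, p ∣ j → n j = 0) ∧
      ∀ d : ℕ, ∃ N₀ : ℕ, ∀ N ≥ N₀,
        (X : PowerSeries (ZMod p)) ^ d ∣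
          ((∏ j ∈ (Finset.range (N + 1)).filter fun j => ¬ p ∣ j,
            (1 + X ^ j : PowerSeries (ZMod p)) ^ ((n j).appr N)) - u) := by
  obtain ⟨g, hg, hug⟩ := exists_smodEq_prod_one_add_X_pow_pow hu
  choose x hx using fun j => PadicInt.exists_toZModPow_eq_sum (p := p) fun i => g (p ^ i * j)
  refine ⟨fun j => if p ∣ j then 0 else x j,
    ⟨fun j hj => if_pos hj, fun d => ⟨d, fun N hN => ?_⟩⟩, ?_⟩
  · refine (pow_dvd_pow X (by omega)).trans
      (X_pow_succ_dvd_prod_appr_sub (hug N) fun j hj => ?_)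
    simp only [if_neg hj, hx]
  · rintro n ⟨hn₀, hn⟩
    funext j
    by_cases hj : p ∣ j
    · rw [hn₀ j hj, if_pos hj]
    · rw [if_neg hj, ← PadicInt.ext_of_toZModPow]
      exact fun K => (toZModPow_eq_sum_of_forall_X_pow_dvd hg hug hn hj K).trans (hx j K).symm
end

section
/- Let p be a prime, U_1 = 1 + tF_p[[t]], and let χ : U_1 → ℤ/p²ℤ be a continuous surjective group homomorphism (where U_1 has the t-adic topology and ℤ/p²ℤ the discrete topology). For j ≥ 1 let b^{(j−1)} denote the largest positive integer b such that χ(1 + t^b F_p[[t]]) ⊄ p^j ℤ/p²ℤ. Then b^{(0)} is coprime to p. -/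
open PowerSeries

/-- The subgroup `1 + t^k F_p[[t]]` of the units of `F_p[[t]]`. -/
def Ugrp (p k : ℕ) : Subgroup (PowerSeries (ZMod p))ˣ where
  carrier := {u | (X : PowerSeries (ZMod p)) ^ k ∣ ((u : PowerSeries (ZMod p)) - 1)}
  one_mem' := by simp
  mul_mem' := by
    intro a b ha hb
    have h : ((a * b : (PowerSeries (ZMod p))ˣ) : PowerSeries (ZMod p)) - 1
        = (a : PowerSeries (ZMod p)) * ((b : PowerSeries (ZMod p)) - 1)
          + ((a : PowerSeries (ZMod p)) - 1) := by push_cast; ring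
    rw [Set.mem_setOf_eq, h]
    exact dvd_add (Dvd.dvd.mul_left hb _) ha
  inv_mem' := by
    intro a ha
    have key : ((a⁻¹ : (PowerSeries (ZMod p))ˣ) : PowerSeries (ZMod p)) - 1
        = -(((a⁻¹ : (PowerSeries (ZMod p))ˣ) : PowerSeries (ZMod p))
            * ((a : PowerSeries (ZMod p)) - 1)) := by
      rw [mul_sub, Units.inv_mul]; ring
    rw [Set.mem_setOf_eq, key]
    exact dvd_neg.mpr (Dvd.dvd.mul_left ha _)

/-- `χ` is a homomorphism from the multiplicative group `U₁` to `ℤ/p²ℤ`. -/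
def IsHom (p : ℕ) (χ : Ugrp p 1 → ZMod (p ^ 2)) : Prop :=
  ∀ a b : Ugrp p 1, χ (a * b) = χ a + χ b

/-- Continuity of `χ` (the target being discrete): `χ` kills some `1 + t^N F_p[[t]]`. -/
def IsCont (p : ℕ) (χ : Ugrp p 1 → ZMod (p ^ 2)) : Prop :=
  ∃ N : ℕ, ∀ u : Ugrp p 1,
    (X : PowerSeries (ZMod p)) ^ N ∣ ((u : (PowerSeries (ZMod p))ˣ) : PowerSeries (ZMod p)) - 1 →
      χ u = 0

/-- The break sequence of `χ : U₁ → ℤ/p²ℤ` is `⟨b0, b1⟩`: `b^{(j-1)}` is the largest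
positive `b` such that `χ(1 + t^b F_p[[t]])` is not contained in `p^j · ℤ/p²ℤ`. -/
def HasBreaks (p : ℕ) (χ : Ugrp p 1 → ZMod (p ^ 2)) (b0 b1 : ℕ) : Prop :=
  IsGreatest {b : ℕ | 0 < b ∧ ∃ u : Ugrp p 1,
    ((X : PowerSeries (ZMod p)) ^ b ∣ ((u : (PowerSeries (ZMod p))ˣ) : PowerSeries (ZMod p)) - 1)
      ∧ ¬ (p : ZMod (p ^ 2)) ∣ χ u} b0 ∧
  IsGreatest {b : ℕ | 0 < b ∧ ∃ u : Ugrp p 1,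
    ((X : PowerSeries (ZMod p)) ^ b ∣ ((u : (PowerSeries (ZMod p))ˣ) : PowerSeries (ZMod p)) - 1)
      ∧ χ u ≠ 0} b1

/-!
If `b₀ = p c`, pick `u ∈ 1 + t^{pc} F_p[[t]]` with `p ∤ χ(u)` and let `a` be its
`t^{pc}`-coefficient. By Frobenius, `v = 1 + a t^c` satisfies `v^p = 1 + a t^{pc}`, so
`w = v^{-p} u` lies in `1 + t^{pc+1} F_p[[t]]` and maximality of `b₀` forces `p ∣ χ(w)`.
Then `χ(u) = p χ(v) + χ(w)` is divisible by `p`, a contradiction.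
-/

section Units

variable {R : Type*} [CommRing R]

theorem Units.dvd_inv_mul_sub_one {u v : Rˣ} {d : R} (h : d ∣ (u : R) - v) :
    d ∣ ((v⁻¹ * u : Rˣ) : R) - 1 := by
  have : ((v⁻¹ * u : Rˣ) : R) - 1 = ((v⁻¹ : Rˣ) : R) * ((u : R) - v) := by
    rw [Units.val_mul, mul_sub, Units.inv_mul]
  exact this ▸ h.mul_left _

end Units

namespace PowerSeries

variable {R : Type*} [CommRing R]

theorem X_pow_succ_dvd_X_pow_mul_sub (n : ℕ) (g : R⟦X⟧) :
    (X : R⟦X⟧) ^ (n + 1) ∣ X ^ n * g - X ^ n * C (constantCoeff g) := by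
  rw [← mul_sub, pow_succ]
  exact mul_dvd_mul_left _ (X_dvd_iff.mpr (by simp))

theorem one_add_X_pow_mul_C_pow_prime (p : ℕ) [Fact p.Prime] (c : ℕ) (a : ZMod p) :
    (1 + X ^ c * C a : (ZMod p)⟦X⟧) ^ p = 1 + X ^ (p * c) * C a := by
  have : CharP (ZMod p)⟦X⟧ p := charP_of_injective_ringHom C_injective p
  rw [add_pow_char, one_pow, mul_pow, ← pow_mul, ← map_pow, ZMod.pow_card, mul_comm c p]

end PowerSeries

theorem IsHom.map_pow {p : ℕ} {χ : Ugrp p 1 → ZMod (p ^ 2)} (hχ : IsHom p χ) (u : Ugrp p 1)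
    (n : ℕ) : χ (u ^ n) = n • χ u :=
  map_nsmul (AddMonoidHom.mk' (fun x : Additive (Ugrp p 1) => χ x.toMul) hχ) n (Additive.ofMul u)

theorem Ugrp.exists_eq_pow_mul {p : ℕ} [Fact p.Prime] {c : ℕ} (hc : c ≠ 0) (u : Ugrp p 1)
    (hu : (X : (ZMod p)⟦X⟧) ^ (p * c) ∣ ((u : (ZMod p)⟦X⟧ˣ) : (ZMod p)⟦X⟧) - 1) :
    ∃ v w : Ugrp p 1, u = v ^ p * w ∧
      (X : (ZMod p)⟦X⟧) ^ (p * c + 1) ∣ ((w : (ZMod p)⟦X⟧ˣ) : (ZMod p)⟦X⟧) - 1 := by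
  obtain ⟨g, hg⟩ := hu
  set f : (ZMod p)⟦X⟧ := 1 + X ^ c * C (constantCoeff g)
  have hf : X ∣ f - 1 := by
    simpa [f] using (dvd_pow_self X hc).mul_right (C (constantCoeff g))
  have hfu : IsUnit f := by
    rw [isUnit_iff_constantCoeff]
    simp [f, zero_pow hc]
  let v : Ugrp p 1 := ⟨hfu.unit, by simpa [Ugrp] using hf⟩
  refine ⟨v, (v ^ p)⁻¹ * u, (mul_inv_cancel_left _ _).symm, Units.dvd_inv_mul_sub_one ?_⟩
  have hvp : (((v ^ p : Ugrp p 1) : (ZMod p)⟦X⟧ˣ) : (ZMod p)⟦X⟧) = f ^ p := by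
    simp [v]
  rw [hvp, one_add_X_pow_mul_C_pow_prime, ← sub_sub, hg]
  exact X_pow_succ_dvd_X_pow_mul_sub _ g

theorem first_break_coprime_general (p : ℕ) [Fact p.Prime] (χ : Ugrp p 1 → ZMod (p ^ 2))
    (hhom : IsHom p χ) (b0 b1 : ℕ) (hb : HasBreaks p χ b0 b1) : Nat.Coprime p b0 := by
  obtain ⟨⟨hb0, u, hu, hχu⟩, hmax⟩ := hb.1
  refine (Nat.Prime.coprime_iff_not_dvd Fact.out).mpr ?_
  rintro ⟨c, rfl⟩
  obtain ⟨v, w, rfl, hw⟩ := Ugrp.exists_eq_pow_mul (by rintro rfl; simp at hb0) u hu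
  have hχw : (p : ZMod (p ^ 2)) ∣ χ w := by
    by_contra h
    have := hmax ⟨Nat.succ_pos _, w, hw, h⟩
    omega
  apply hχu
  rw [hhom, hhom.map_pow, nsmul_eq_mul]
  exact dvd_add (dvd_mul_right _ _) hχw

/-- The first break `b0` of a continuous surjective character `χ : U₁ → ℤ/p²ℤ`
is coprime to `p`. -/
theorem first_break_coprime (p : ℕ) [Fact p.Prime] (χ : Ugrp p 1 → ZMod (p ^ 2))
    (hhom : IsHom p χ) (hcont : IsCont p χ) (hsurj : Function.Surjective χ)
    (b0 b1 : ℕ) (hb : HasBreaks p χ b0 b1) : Nat.Coprime p b0 :=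
  first_break_coprime_general p χ hhom b0 b1 hb
end

section
/- Let p be a prime, let χ : U_1 → ℤ/p²ℤ be a continuous character of type ⟨l, m⟩ with standard expansion χ = Σ_{1≤i≤l, p∤i} x_i Ξ_i + Σ_{1≤j≤m, p∤j} a_j·p·Ξ_j, and let u(t) ∈ 𝒩 be any element of the Nottingham group. Then (ᵤχ)(E_l) ≡ x_l ≡ χ(E_l) (mod p), where ᵤχ(f) := χ(f ∘ u / constant-normalization) denotes the twisted character ᵤχ(f(t)) = χ(f(u(t))) for f ∈ U_1 viewed as a power series in t. -/
/-
Write `E = E_l`. Since `u = t + O(t²)`, the unit `1 + u^l` agrees with `E = 1 + t^l` modulo `t^{l+1}`,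
so `(1 + u^l) = E · w` with `w ∈ 1 + t^{l+1} F_p[[t]]`. The first break of `χ` is `l`, so `χ(w) ∈ pℤ/p²ℤ`,
and therefore `χ(1 + u^l) = χ(E) + χ(w) ≡ χ(E) (mod p)`.
-/

open PowerSeries

/-- `E j = 1 + t^j` as an element of the principal units `U₁`. -/
noncomputable def Eu (p : ℕ) [Fact p.Prime] (j : ℕ) (hj : 0 < j) : Ugrp p 1 := by
  have hu : IsUnit (1 + X ^ j : PowerSeries (ZMod p)) := by
    rw [isUnit_iff_constantCoeff]
    simp [zero_pow hj.ne']
  refine ⟨hu.unit, ?_⟩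
  show (X : PowerSeries (ZMod p)) ^ 1 ∣ _
  rw [IsUnit.unit_spec, pow_one, add_sub_cancel_left]
  exact dvd_pow_self X hj.ne'

theorem Units.dvd_val_inv_mul_sub_one {R : Type*} [CommRing R] {d : R} {a b : Rˣ}
    (h : d ∣ (b : R) - a) : d ∣ ((a⁻¹ * b : Rˣ) : R) - 1 := by
  have hab : ((a⁻¹ * b : Rˣ) : R) - 1 = ((a⁻¹ : Rˣ) : R) * ((b : R) - a) := by
    rw [Units.val_mul, mul_sub, Units.inv_mul]
  exact hab ▸ h.mul_left _

theorem PowerSeries.X_pow_succ_dvd_pow_sub_X_pow {R : Type*} [CommRing R] {u : R⟦X⟧}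
    (hu0 : constantCoeff u = 0) (hu1 : coeff 1 u = 1) (n : ℕ) :
    X ^ (n + 1) ∣ u ^ n - X ^ n := by
  obtain ⟨g, rfl⟩ := X_dvd_iff.mpr hu0
  have hg : X ∣ g - 1 := by
    rw [coeff_succ_X_mul, coeff_zero_eq_constantCoeff_apply] at hu1
    rw [X_dvd_iff, map_sub, hu1, map_one, sub_self]
  have hgn : X ∣ g ^ n - 1 := hg.trans (by simpa using sub_dvd_pow_sub_pow g 1 n)
  rw [mul_pow, ← mul_sub_one, pow_succ]
  exact mul_dvd_mul_left _ hgn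

theorem Eu_val (p : ℕ) [Fact p.Prime] (j : ℕ) (hj : 0 < j) :
    ((Eu p j hj : (PowerSeries (ZMod p))ˣ) : PowerSeries (ZMod p)) = 1 + X ^ j :=
  IsUnit.unit_spec _

theorem HasBreaks.natCast_dvd_apply {p : ℕ} {χ : Ugrp p 1 → ZMod (p ^ 2)} {l m : ℕ}
    (hb : HasBreaks p χ l m) {w : Ugrp p 1}
    (hw : (X : PowerSeries (ZMod p)) ^ (l + 1) ∣
      ((w : (PowerSeries (ZMod p))ˣ) : PowerSeries (ZMod p)) - 1) :
    (p : ZMod (p ^ 2)) ∣ χ w := by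
  by_contra hχ
  have := hb.1.2 ⟨l.succ_pos, w, hw, hχ⟩
  omega

theorem HasBreaks.castHom_apply_eq {p : ℕ} {χ : Ugrp p 1 → ZMod (p ^ 2)}
    {l m : ℕ} (hb : HasBreaks p χ l m) (hhom : IsHom p χ) {v w : Ugrp p 1}
    (hvw : (X : PowerSeries (ZMod p)) ^ (l + 1) ∣
      ((v : (PowerSeries (ZMod p))ˣ) : PowerSeries (ZMod p)) -
        ((w : (PowerSeries (ZMod p))ˣ) : PowerSeries (ZMod p))) :
    ZMod.castHom (dvd_pow_self p two_ne_zero) (ZMod p) (χ v) =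
      ZMod.castHom (dvd_pow_self p two_ne_zero) (ZMod p) (χ w) := by
  obtain ⟨c, hc⟩ := hb.natCast_dvd_apply (w := w⁻¹ * v) (Units.dvd_val_inv_mul_sub_one hvw)
  have hsplit : χ v = χ w + p * c := by rw [← hc, ← hhom, mul_inv_cancel_left]
  rw [hsplit, map_add, map_mul, map_natCast, ZMod.natCast_self, zero_mul, add_zero]

theorem twisted_char_eval_El_general (p : ℕ) [Fact p.Prime] (l m : ℕ) (hl : 0 < l)
    (χ : Ugrp p 1 → ZMod (p ^ 2)) (hhom : IsHom p χ)
    (hb : HasBreaks p χ l m)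
    (u : PowerSeries (ZMod p)) (hu0 : constantCoeff u = 0)
    (hu1 : coeff 1 u = 1) (xl : ZMod p)
    (hx : ZMod.castHom (dvd_pow_self p two_ne_zero) (ZMod p) (χ (Eu p l hl)) = xl) :
    ∀ v : Ugrp p 1,
      ((v : (PowerSeries (ZMod p))ˣ) : PowerSeries (ZMod p)) = 1 + u ^ l →
      ZMod.castHom (dvd_pow_self p two_ne_zero) (ZMod p) (χ v) = xl := by
  intro v hv
  have hvE : ((v : (PowerSeries (ZMod p))ˣ) : PowerSeries (ZMod p)) -
      ((Eu p l hl : (PowerSeries (ZMod p))ˣ) : PowerSeries (ZMod p)) = u ^ l - X ^ l := by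
    rw [hv, Eu_val]; ring
  rw [← hx]
  exact hb.castHom_apply_eq hhom (hvE ▸ X_pow_succ_dvd_pow_sub_X_pow hu0 hu1 l)

/-- Lemma (evaluation, part (a)): for `χ` of type `⟨l, m⟩` with standard-expansion leading
coefficient `x_l = χ(E_l) mod p`, and any `u` in the Nottingham group,
`(ᵤχ)(E_l) = χ(1 + u^l) ≡ x_l ≡ χ(E_l) (mod p)`. -/
theorem twisted_char_eval_El (p : ℕ) [Fact p.Prime] (l m : ℕ) (hl : 0 < l)
    (χ : Ugrp p 1 → ZMod (p ^ 2)) (hhom : IsHom p χ) (hcont : IsCont p χ)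
    (hb : HasBreaks p χ l m)
    (u : PowerSeries (ZMod p)) (hu0 : constantCoeff u = 0)
    (hu1 : coeff 1 u = 1) (xl : ZMod p)
    (hx : ZMod.castHom (dvd_pow_self p two_ne_zero) (ZMod p) (χ (Eu p l hl)) = xl) :
    ∀ v : Ugrp p 1,
      ((v : (PowerSeries (ZMod p))ˣ) : PowerSeries (ZMod p)) = 1 + u ^ l →
      ZMod.castHom (dvd_pow_self p two_ne_zero) (ZMod p) (χ v) = xl :=
  twisted_char_eval_El_general p l m hl χ hhom hb u hu0 hu1 xl hx
end

section
/- Let p be a prime and u an element of order p in the Nottingham group 𝒩 over F_p. For any positive integer n, u and u^n are conjugate in 𝒩 if and only if u = u^n. -/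
open PowerSeries

/-- The Nottingham group over `F_p`, realized as the group of (automatically continuous)
ring automorphisms `σ` of `F_p[[t]]` with `σ(t) = t(1 + a₁t + ⋯)`, i.e. wild automorphisms.
`σ` corresponds to the power series `u(t) = σ(t)`. -/
def Nottingham (p : ℕ) [Fact p.Prime] : Subgroup (RingAut (PowerSeries (ZMod p))) where
  carrier := {σ | constantCoeff (R := ZMod p) (σ X) = 0 ∧ coeff (R := ZMod p) 1 (σ X) = 1}
  one_mem' := by
    constructor
    · show constantCoeff (R := ZMod p) X = 0
      simp
    · show coeff (R := ZMod p) 1 (X : PowerSeries (ZMod p)) = 1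
      simp
  mul_mem' := by
    rintro σ τ ⟨h1, h2⟩ ⟨h3, h4⟩
    have hX : (σ * τ) X = σ (τ X) := rfl
    obtain ⟨g, hg⟩ := X_dvd_iff.mpr h3
    have hg1 : constantCoeff (R := ZMod p) g = 1 := by
      have := h4; rw [hg] at this
      rwa [show (1 : ℕ) = 0 + 1 from rfl, coeff_succ_X_mul, coeff_zero_eq_constantCoeff] at this
    obtain ⟨s, hs⟩ := X_dvd_iff.mpr h1
    have hs1 : constantCoeff (R := ZMod p) s = 1 := by
      have := h2; rw [hs] at this
      rwa [show (1 : ℕ) = 0 + 1 from rfl, coeff_succ_X_mul, coeff_zero_eq_constantCoeff] at this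
    -- σ g has constant coefficient 1
    obtain ⟨h', hh'⟩ := X_dvd_iff.mpr
      (show constantCoeff (R := ZMod p) (g - 1) = 0 by simp [hg1])
    have hgd : g = 1 + X * h' := by rw [← hh']; ring
    have hσg : constantCoeff (R := ZMod p) (σ g) = 1 := by
      rw [hgd, map_add, map_mul, map_one, map_add, map_mul, hs]
      simp
    constructor
    · show constantCoeff (R := ZMod p) ((σ * τ) X) = 0
      rw [hX, hg, map_mul, hs]
      simp [mul_assoc]
    · show coeff (R := ZMod p) 1 ((σ * τ) X) = 1
      rw [hX, hg, map_mul, hs, mul_assoc,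
        show (1 : ℕ) = 0 + 1 from rfl, coeff_succ_X_mul, coeff_zero_eq_constantCoeff,
        map_mul, hs1, hσg]
      simp
  inv_mem' := by
    rintro σ ⟨h1, h2⟩
    have hX : σ (σ⁻¹ X) = X := by
      have : (σ * σ⁻¹) X = X := by rw [mul_inv_cancel]; rfl
      exact this
    obtain ⟨s, hs⟩ := X_dvd_iff.mpr h1
    have hs1 : constantCoeff (R := ZMod p) s = 1 := by
      have := h2; rw [hs] at this
      rwa [show (1 : ℕ) = 0 + 1 from rfl, coeff_succ_X_mul, coeff_zero_eq_constantCoeff] at this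
    set f := σ⁻¹ X with hf
    -- write f = C c + X * h
    obtain ⟨h', hh'⟩ := X_dvd_iff.mpr
      (show constantCoeff (R := ZMod p) (f - C (R := ZMod p) (constantCoeff (R := ZMod p) f)) = 0 by simp)
    have hfd : f = C (R := ZMod p) (constantCoeff (R := ZMod p) f) + X * h' := by rw [← hh']; ring
    have hC : ∀ c : ZMod p, σ (C (R := ZMod p) c) = C (R := ZMod p) c := by
      intro c
      have : (C (R := ZMod p) c) = ((c.val : ℕ) : PowerSeries (ZMod p)) := by
        rw [← map_natCast (C (R := ZMod p)) c.val, ZMod.natCast_val, ZMod.cast_id]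
      rw [this, map_natCast]
    have hσf : σ f = X := hX
    have hc0 : constantCoeff (R := ZMod p) f = 0 := by
      have := congrArg (constantCoeff (R := ZMod p)) hσf
      rw [hfd, map_add, map_mul, hC, map_add, map_mul, hs] at this
      simpa [mul_assoc] using this
    have hfd' : f = X * h' := by rw [hfd, hc0]; simp
    constructor
    · exact hc0
    · -- coeff 1 f = constantCoeff h' ; and σ f = X forces constantCoeff (σ h') = 1,
      -- which equals constantCoeff h'
      have hXh : σ X * σ h' = X := by rw [← map_mul, ← hfd']; exact hσf
      have h1' : constantCoeff (R := ZMod p) (σ h') = 1 := by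
        have := congrArg (coeff (R := ZMod p) 1) hXh
        rw [hs, mul_assoc, show (1:ℕ) = 0 + 1 from rfl, coeff_succ_X_mul,
          coeff_zero_eq_constantCoeff, map_mul, hs1, one_mul] at this
        simpa using this
      -- constantCoeff (σ h') = constantCoeff h'
      obtain ⟨h'', hh''⟩ := X_dvd_iff.mpr
        (show constantCoeff (R := ZMod p) (h' - C (R := ZMod p) (constantCoeff (R := ZMod p) h')) = 0 by simp)
      have : h' = C (R := ZMod p) (constantCoeff (R := ZMod p) h') + X * h'' := by rw [← hh'']; ring
      have hch : constantCoeff (R := ZMod p) (σ h') = constantCoeff (R := ZMod p) h' := by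
        rw [this, map_add, map_mul, hC, hs, map_add, map_mul]
        simp [mul_assoc]
      show coeff (R := ZMod p) 1 f = 1
      rw [hfd', show (1:ℕ) = 0 + 1 from rfl, coeff_succ_X_mul, coeff_zero_eq_constantCoeff,
        ← hch, h1']

/-- `u` is an order `p²` element of the Nottingham group of type `⟨l, m⟩`:
via Lubin's correspondence, this is equivalent to the lower ramification data
`v(u(t) - t) = l + 1` and `v(u^p(t) - t) = l + p(m - l) + 1`. -/
def NottType (p : ℕ) [Fact p.Prime] (u : Nottingham p) (l m : ℕ) : Prop :=
  orderOf u = p ^ 2 ∧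
  order ((u : RingAut (PowerSeries (ZMod p))) X - X) = (l + 1 : ℕ) ∧
  order (((u ^ p : Nottingham p) : RingAut (PowerSeries (ZMod p))) X - X)
    = (l + p * (m - l) + 1 : ℕ)

/-!
Write `σ(t) = t + a tᵏ + O(tᵏ⁺¹)` with `a ≠ 0`. Whenever `ρ(t) ≡ t mod tᵏ`, one has
`ρ(f) - f ≡ f'(0) (ρ(t) - t) mod tᵏ⁺¹`, so the coefficient of `tᵏ` in `ρ(t) - t` is additive
under composition of such `ρ`, and `σⁿ(t) = t + n a tᵏ + O(tᵏ⁺¹)`. On the other hand every `τ ∈ 𝒩`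
acts trivially on `tᵏ/tᵏ⁺¹`, so `τ σ τ⁻¹` has the same leading term as `σ`. Hence `σ ~ σⁿ` forces
`n a = a`, i.e. `n ≡ 1 mod p`, and then `σⁿ = σ` because `σ` has order `p`.
-/

namespace PowerSeries

section RingHom

variable {R : Type*} [CommRing R] {F : Type*} [FunLike F R⟦X⟧ R⟦X⟧] [RingHomClass F R⟦X⟧ R⟦X⟧]
  {σ : F}

theorem coeff_eq_of_X_pow_dvd_sub {f g : R⟦X⟧} {m n : ℕ} (h : X ^ n ∣ f - g) (hm : m < n) :
    coeff m f = coeff m g :=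
  sub_eq_zero.mp (by simpa using X_pow_dvd_iff.mp h m hm)

theorem X_pow_dvd_map_sub_self (hσ : ∀ c, σ (C c) = C c) {k : ℕ} (hk : X ^ k ∣ σ X - X)
    (f : R⟦X⟧) : X ^ k ∣ σ f - f := by
  induction k generalizing f with
  | zero => simp
  | succ k ih =>
    obtain ⟨g, hg⟩ := X_dvd_iff.mpr (show constantCoeff (f - C (constantCoeff f)) = 0 by simp)
    have hf : f = C (constantCoeff f) + X * g := by rw [← hg]; ring
    have hsplit : σ f - f = (σ X - X) * σ g + X * (σ g - g) := by
      rw [hf, map_add, map_mul, hσ]; ring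
    rw [hsplit]
    refine dvd_add (dvd_mul_of_dvd_left hk _) ?_
    rw [pow_succ']
    exact mul_dvd_mul_left X (ih (dvd_trans (pow_dvd_pow X k.le_succ) hk) g)

theorem map_eq_self_of_map_X_eq (hσ : ∀ c, σ (C c) = C c) (hX : σ X = X) (f : R⟦X⟧) :
    σ f = f :=
  ext fun j => coeff_eq_of_X_pow_dvd_sub
    (X_pow_dvd_map_sub_self hσ (k := j + 1) (by simp [hX]) f) j.lt_succ_self

theorem X_pow_succ_dvd_map_sub_self (hσ : ∀ c, σ (C c) = C c) (hX : X ^ 2 ∣ σ X - X) {k : ℕ}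
    {f : R⟦X⟧} (hf : X ^ k ∣ f) : X ^ (k + 1) ∣ σ f - f := by
  obtain ⟨g, rfl⟩ := hf
  obtain ⟨v, hv⟩ := hX
  have hσX : σ X = X * (1 + X * v) := by linear_combination hv
  have hsplit : σ (X ^ k * g) - X ^ k * g =
      X ^ k * (((1 + X * v) ^ k - 1 ^ k) * σ g + (σ g - g)) := by
    rw [map_mul, map_pow, hσX, mul_pow]; ring
  have hunit : X ∣ (1 + X * v) ^ k - 1 ^ k := by
    have := sub_dvd_pow_sub_pow (1 + X * v) 1 k
    rw [add_sub_cancel_left] at this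
    exact dvd_trans (dvd_mul_right X v) this
  have hconst : X ∣ σ g - g := by
    simpa using
      X_pow_dvd_map_sub_self hσ (k := 1) (dvd_trans (pow_dvd_pow X one_le_two) ⟨v, hv⟩) g
  rw [hsplit, pow_succ]
  exact mul_dvd_mul_left _ (dvd_add (dvd_mul_of_dvd_left hunit _) hconst)

theorem X_pow_succ_dvd_map_sub_self_sub (hσ : ∀ c, σ (C c) = C c) {k : ℕ} (hk : 1 ≤ k)
    (hX : X ^ k ∣ σ X - X) (f : R⟦X⟧) :
    X ^ (k + 1) ∣ σ f - f - C (coeff 1 f) * (σ X - X) := by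
  obtain ⟨g, hg⟩ : X ^ 2 ∣ f - C (coeff 0 f) - C (coeff 1 f) * X :=
    X_pow_dvd_iff.mpr fun m hm => by interval_cases m <;> simp
  set a₀ := coeff 0 f
  set a₁ := coeff 1 f
  have hf : f = C a₀ + C a₁ * X + X ^ 2 * g := by rw [← hg]; ring
  have hsplit : σ f - f - C a₁ * (σ X - X) =
      (σ X - X) * ((σ X - X) + 2 * X) * σ g + X ^ 2 * (σ g - g) := by
    rw [hf, map_add, map_add, map_mul, map_mul, map_pow, hσ, hσ]
    ring
  have hX1 : X ∣ σ X - X := dvd_trans (dvd_pow_self X (by omega)) hX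
  rw [hsplit]
  refine dvd_add (dvd_mul_of_dvd_left ?_ _) ?_
  · rw [pow_succ]
    exact mul_dvd_mul hX (dvd_add hX1 (dvd_mul_left (X : R⟦X⟧) 2))
  · have := mul_dvd_mul_left (X ^ 2) (X_pow_dvd_map_sub_self hσ hX g)
    rw [← pow_add] at this
    exact dvd_trans (pow_dvd_pow X (by omega)) this

end RingHom

theorem map_C_zmod {n : ℕ} {F : Type*} [FunLike F (ZMod n)⟦X⟧ (ZMod n)⟦X⟧]
    [RingHomClass F (ZMod n)⟦X⟧ (ZMod n)⟦X⟧] (σ : F) (c : ZMod n) : σ (C c) = C c :=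
  RingHom.congr_fun (RingHom.ext_zmod ((σ : (ZMod n)⟦X⟧ →+* (ZMod n)⟦X⟧).comp C) C) c

end PowerSeries

namespace Nottingham

variable {p : ℕ} [Fact p.Prime]

theorem X_sq_dvd_apply_X_sub_X {σ : RingAut (ZMod p)⟦X⟧} (hσ : σ ∈ Nottingham p) :
    X ^ 2 ∣ σ X - X :=
  X_pow_dvd_iff.mpr fun m hm => by interval_cases m <;> simp [hσ.1, hσ.2]

theorem X_pow_succ_dvd_pow_apply_X_sub {σ : RingAut (ZMod p)⟦X⟧} (hσ : σ ∈ Nottingham p)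
    {k : ℕ} (hk : X ^ k ∣ σ X - X) (m : ℕ) :
    X ^ (k + 1) ∣ (σ ^ m) X - X - C (m : ZMod p) * (σ X - X) := by
  induction m with
  | zero => simp
  | succ m ih =>
    have hsplit : (σ ^ (m + 1)) X - X - C ((m + 1 : ℕ) : ZMod p) * (σ X - X) =
        ((σ ^ m) (σ X - X) - (σ X - X)) + ((σ ^ m) X - X - C (m : ZMod p) * (σ X - X)) := by
      rw [pow_succ, RingAut.mul_apply, map_sub, Nat.cast_succ, map_add, map_one]; ring
    rw [hsplit]
    exact dvd_add (X_pow_succ_dvd_map_sub_self (map_C_zmod _)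
      (X_sq_dvd_apply_X_sub_X (pow_mem hσ m)) hk) ih

theorem natCast_eq_one_of_isConj {u : Nottingham p} (hu : u ≠ 1) {n : ℕ}
    (h : IsConj u (u ^ n)) : (n : ZMod p) = 1 := by
  obtain ⟨c, hc⟩ := isConj_iff.mp h
  set σ : RingAut (ZMod p)⟦X⟧ := ↑u
  set τ : RingAut (ZMod p)⟦X⟧ := ↑c
  have hcomm : τ (σ X) = (σ ^ n) (τ X) := by
    simpa using congrArg (fun g : Nottingham p => (g : RingAut (ZMod p)⟦X⟧) X)
      (mul_inv_eq_iff_eq_mul.mp hc)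
  set w := σ X - X
  have hw : w ≠ 0 := fun hw => hu <| Subtype.ext <| RingEquiv.ext <|
    map_eq_self_of_map_X_eq (map_C_zmod σ) (sub_eq_zero.mp hw)
  set k := w.order.toNat
  have hwk : X ^ k ∣ w := X_pow_order_dvd
  have hk : 1 ≤ k := by
    by_contra! hk0
    exact coeff_order hw (X_pow_dvd_iff.mp (X_sq_dvd_apply_X_sub_X u.2) k (by omega))
  have hσn : X ^ k ∣ (σ ^ n) X - X := by
    have := dvd_trans (pow_dvd_pow X k.le_succ) (X_pow_succ_dvd_pow_apply_X_sub u.2 hwk n)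
    exact (dvd_sub_left (dvd_mul_of_dvd_right hwk _)).mp this
  have hconj : coeff k (τ (σ X) - τ X) = coeff k w := by
    rw [← map_sub]
    exact coeff_eq_of_X_pow_dvd_sub
      (X_pow_succ_dvd_map_sub_self (map_C_zmod τ) (X_sq_dvd_apply_X_sub_X c.2) hwk) k.lt_succ_self
  have hpow : coeff k ((σ ^ n) (τ X) - τ X) = n * coeff k w := by
    rw [coeff_eq_of_X_pow_dvd_sub (X_pow_succ_dvd_map_sub_self_sub (map_C_zmod _) hk hσn _)
      k.lt_succ_self, coeff_C_mul, c.2.2, one_mul, ← coeff_C_mul,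
      coeff_eq_of_X_pow_dvd_sub (X_pow_succ_dvd_pow_apply_X_sub u.2 hwk n) k.lt_succ_self]
  rw [hcomm, hpow] at hconj
  exact (mul_left_eq_self₀.mp hconj).resolve_right (coeff_order hw)

end Nottingham

/-- For an order `p` element `u` of the Nottingham group, `u` and `u^n` are conjugate
if and only if they are equal. -/
theorem order_p_conj_iff_eq (p : ℕ) [Fact p.Prime] (u : Nottingham p)
    (hu : orderOf u = p) (n : ℕ) : IsConj u (u ^ n) ↔ u = u ^ n := by
  refine ⟨fun h => ?_, fun h => h ▸ IsConj.refl u⟩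
  obtain rfl | hu1 := eq_or_ne u 1
  · rw [one_pow]
  have hn : n ≡ 1 [MOD orderOf u] := by
    rw [hu, ← ZMod.natCast_eq_natCast_iff, Nat.cast_one]
    exact Nottingham.natCast_eq_one_of_isConj hu1 h
  rw [← pow_eq_pow_iff_modEq, pow_one] at hn
  exact hn.symm
end

section
/- Let p be a prime, and let u(t) = t(1 + t^{l+j})^d (1 + t^m)^e be an element of the Nottingham group over F_p, where l, j, m, d, e are positive integers with l + j < m. Then, as elements of U_1 = 1 + tF_p[[t]], one has 1 + u(t)^{m−l−j} ≡ (1 + t^{m−l−j})·(1 + t^m)^{d(m−l−j)} modulo the subgroup 1 + t^{m+1}F_p[[t]]. -/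
open PowerSeries

/-
Write `n = m - l - j` and `s = l + j`, so that `m = n + s`, and compute modulo `t^{m+1}`.
Then `u^n = t^n (1 + t^s)^{dn} (1 + t^m)^{en}`. A factor `t^n` kills `t^m` and `t^{2s}`, so in the
binomial expansions only the linear terms survive: `u^n ≡ t^n (1 + dn t^s) = t^n + dn t^m`.
Likewise `(1 + t^n)(1 + t^m)^{dn} ≡ 1 + t^n + dn t^m`. The right-hand side is a unit, so the
congruence of the two sides is a factorisation with a cofactor in `1 + t^{m+1} F_p[[t]]`.
-/

section CommRing

variable {R : Type*} [CommRing R]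

theorem mul_one_add_pow_of_mul_sq_eq_zero {a y : R} (h : a * y ^ 2 = 0) (N : ℕ) :
    a * (1 + y) ^ N = a + N * a * y := by
  induction N with
  | zero => simp
  | succ N ih =>
    rw [pow_succ, ← mul_assoc, ih]
    push_cast
    linear_combination (N : R) * h

theorem mul_one_add_pow_of_mul_eq_zero {a y : R} (h : a * y = 0) (N : ℕ) :
    a * (1 + y) ^ N = a := by
  rw [mul_one_add_pow_of_mul_sq_eq_zero (by linear_combination y * h), mul_assoc, h, mul_zero,
    add_zero]

theorem one_add_pow_mul_one_add_pow_of_pow_eq_zero {x : R} {n s : ℕ} (hn : 0 < n) (hs : 0 < s)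
    (hx : x ^ (n + s + 1) = 0) (A B : ℕ) :
    1 + x ^ n * (1 + x ^ s) ^ A * (1 + x ^ (n + s)) ^ B
      = (1 + x ^ n) * (1 + x ^ (n + s)) ^ A := by
  have vanish (k : ℕ) (hk : n + s + 1 ≤ k) : x ^ k = 0 := pow_eq_zero_of_le hk hx
  have hns : x ^ n * x ^ (n + s) = 0 := by rw [← pow_add]; exact vanish _ (by omega)
  have hss : x ^ n * (x ^ s) ^ 2 = 0 := by rw [← pow_mul, ← pow_add]; exact vanish _ (by omega)
  have hmm : 1 * (x ^ (n + s)) ^ 2 = 0 := by rw [one_mul, ← pow_mul]; exact vanish _ (by omega)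
  linear_combination (1 + x ^ (n + s)) ^ B * mul_one_add_pow_of_mul_sq_eq_zero hss A
    + (1 + A * x ^ s) * mul_one_add_pow_of_mul_eq_zero hns B
    - mul_one_add_pow_of_mul_eq_zero hns A - mul_one_add_pow_of_mul_sq_eq_zero hmm A

theorem exists_eq_mul_one_add_mul_of_dvd_sub {a f c : R} (ha : IsUnit a) (h : c ∣ f - a) :
    ∃ g, f = a * (1 + c * g) := by
  obtain ⟨q, hq⟩ := h
  obtain ⟨u, rfl⟩ := ha
  exact ⟨↑u⁻¹ * q, by linear_combination hq - c * q * u.mul_inv⟩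

theorem X_pow_dvd_one_add_X_pow_mul_sub {n s : ℕ} (hn : 0 < n) (hs : 0 < s) (A B : ℕ) :
    (X : R⟦X⟧) ^ (n + s + 1) ∣ (1 + X ^ n * (1 + X ^ s) ^ A * (1 + X ^ (n + s)) ^ B)
      - (1 + X ^ n) * (1 + X ^ (n + s)) ^ A := by
  let π := Ideal.Quotient.mk (Ideal.span {(X : R⟦X⟧) ^ (n + s + 1)})
  have hX : π X ^ (n + s + 1) = 0 := by
    rw [← map_pow, Ideal.Quotient.eq_zero_iff_mem]
    exact Ideal.mem_span_singleton_self _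
  have key := one_add_pow_mul_one_add_pow_of_pow_eq_zero hn hs hX A B
  simp only [← map_pow, ← map_one π, ← map_add, ← map_mul] at key
  rwa [Ideal.Quotient.eq, Ideal.mem_span_singleton] at key

theorem isUnit_one_add_X_pow {k : ℕ} (hk : 0 < k) :
    IsUnit (1 + (X : R⟦X⟧) ^ k) := by
  simp [isUnit_iff_constantCoeff, zero_pow hk.ne']

end CommRing

theorem uj_pow_congr_general (p : ℕ) (l j m d e : ℕ)
    (hl : 0 < l) (hlt : l + j < m) :
    ∃ g : PowerSeries (ZMod p),
      1 + (X * (1 + X ^ (l + j)) ^ d * (1 + X ^ m) ^ e : PowerSeries (ZMod p)) ^ (m - l - j)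
        = (1 + X ^ (m - l - j)) * (1 + X ^ m) ^ (d * (m - l - j))
          * (1 + X ^ (m + 1) * g) := by
  obtain ⟨n, hn, rfl⟩ : ∃ n, 0 < n ∧ m = n + (l + j) := ⟨m - l - j, by omega, by omega⟩
  have hmn : n + (l + j) - l - j = n := by omega
  rw [hmn, mul_pow, mul_pow, ← pow_mul, ← pow_mul, mul_comm d, mul_comm e]
  refine exists_eq_mul_one_add_mul_of_dvd_sub ?_
    (X_pow_dvd_one_add_X_pow_mul_sub hn (by omega) _ _)
  exact (isUnit_one_add_X_pow hn).mul ((isUnit_one_add_X_pow (by omega)).pow _)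

/-- For `u(t) = t (1 + t^{l+j})^d (1 + t^m)^e` with `l + j < m`, one has
`1 + u(t)^{m-l-j} ≡ (1 + t^{m-l-j})(1 + t^m)^{d(m-l-j)}` mod `1 + t^{m+1} F_p[[t]]`. -/
theorem uj_pow_congr (p : ℕ) [Fact p.Prime] (l j m d e : ℕ)
    (hl : 0 < l) (hj : 0 < j) (hd : 0 < d) (he : 0 < e) (hlt : l + j < m) :
    ∃ g : PowerSeries (ZMod p),
      1 + (X * (1 + X ^ (l + j)) ^ d * (1 + X ^ m) ^ e : PowerSeries (ZMod p)) ^ (m - l - j)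
        = (1 + X ^ (m - l - j)) * (1 + X ^ m) ^ (d * (m - l - j))
          * (1 + X ^ (m + 1) * g) :=
  uj_pow_congr_general p l j m d e hl hlt
end

section
/- Let p be a prime, let χ : U_1 → ℤ/p²ℤ be a continuous character in reduced form of type ⟨l, m⟩ with l < p, and let u(t) = t·∏_{k≥1}(1+t^k)^{n_k} ∈ 𝒩 with n_k ∈ {0,…,p−1} and smallest nonzero index k̃ satisfying 0 < k̃ < l. If χ(E_l) ≡ x_l ≢ 0 (mod p), then (ᵤχ)(E_{l−k̃}) ≡ n_{k̃}·(l − k̃)·x_l ≢ 0 (mod p). -/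
open PowerSeries

/-!
Modulo `p`, a character in reduced form only sees the `l`-th step of the filtration
`U_j = 1 + t^j F_p[[t]]`. Indeed `χ(E_j) ≡ 0` for every `j ≠ l` (when `p ∣ j` because
`E_j = E_{j/p}^p`), and every `u ∈ U_j` is `E_j^a` times an element of `U_{j+1}`, with `a` the
`t^j`-coefficient of `u`; descending from the level where continuity kills `χ`, this gives
`χ(U_{l+1}) ⊆ pℤ/p²ℤ`. With `q = l - k̃`, `w^q ≡ 1 + q n_k̃ t^k̃ (mod t^{k̃+1})`, so
`1 + (t w)^q ≡ E_q · E_l^{q n_k̃} (mod t^{l+1})` and therefore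
`χ(1 + u^q) ≡ χ(E_q) + q n_k̃ x_l ≡ q n_k̃ x_l (mod p)`, which is nonzero as `0 < q, x_l < p`.
-/

section PowerSeriesCongruences

variable {R : Type*} [CommRing R]

theorem X_pow_dvd_sub_one {w : R⟦X⟧} {k : ℕ} (hw : constantCoeff w = 1)
    (hmin : ∀ i, 0 < i → i < k → coeff i w = 0) : X ^ k ∣ w - 1 := by
  refine X_pow_dvd_iff.mpr fun i hi => ?_
  rcases Nat.eq_zero_or_pos i with rfl | hi0
  · simp [hw]
  · simp [hmin i hi0 hi, coeff_one, hi0.ne']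

theorem X_pow_succ_dvd_sub_C_coeff_mul_X_pow {f : R⟦X⟧} {k : ℕ} (h : X ^ k ∣ f) :
    X ^ (k + 1) ∣ f - C (coeff k f) * X ^ k := by
  obtain ⟨g, rfl⟩ := h
  have hg : X ∣ g - C (constantCoeff g) := by simp [X_dvd_iff]
  rw [coeff_X_pow_mul', if_pos le_rfl, Nat.sub_self, coeff_zero_eq_constantCoeff_apply,
    pow_succ, show X ^ k * g - C (constantCoeff g) * X ^ k = X ^ k * (g - C (constantCoeff g))
      by ring]
  exact mul_dvd_mul_left _ hg

theorem X_pow_succ_dvd_one_add_pow_sub {r : R⟦X⟧} {k : ℕ} (hk : 0 < k) (h : X ^ k ∣ r)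
    (n : ℕ) : X ^ (k + 1) ∣ (1 + r) ^ n - (1 + (n : R⟦X⟧) * r) := by
  have hsq : r ^ 2 ∣ (1 + r) ^ n - (1 + (n : R⟦X⟧) * r) := by
    simpa [sub_sub, add_comm, mul_comm] using sq_dvd_add_pow_sub_sub r (1 : R⟦X⟧) n
  calc (X : R⟦X⟧) ^ (k + 1) ∣ X ^ (k * 2) := pow_dvd_pow X (by omega)
    _ = (X ^ k) ^ 2 := pow_mul X k 2
    _ ∣ r ^ 2 := pow_dvd_pow_of_dvd h 2
    _ ∣ _ := hsq

theorem X_pow_dvd_one_add_X_mul_pow_sub {w : R⟦X⟧} {k q n : ℕ} (hk : 0 < k) (hq : 0 < q)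
    (hw : X ^ k ∣ w - 1) (hn : (n : R) = q * coeff k w) :
    X ^ (q + k + 1) ∣ (1 + (X * w) ^ q) - (1 + X ^ q) * (1 + X ^ (q + k)) ^ n := by
  set c := coeff k w
  have hw1 : X ^ (k + 1) ∣ w - (1 + C c * X ^ k) := by
    have h := X_pow_succ_dvd_sub_C_coeff_mul_X_pow hw
    rwa [map_sub, coeff_one, if_neg hk.ne', sub_zero, sub_sub] at h
  have hwq : X ^ (k + 1) ∣ w ^ q - (1 + (q : R⟦X⟧) * (C c * X ^ k)) := by
    have h := dvd_add (hw1.trans (sub_dvd_pow_sub_pow _ _ q))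
      (X_pow_succ_dvd_one_add_pow_sub hk (dvd_mul_left (X ^ k) (C c)) q)
    rwa [sub_add_sub_cancel] at h
  have hlin : X ^ (q + k + 1) ∣ (1 + X ^ (q + k)) ^ n - (1 + (n : R⟦X⟧) * X ^ (q + k)) :=
    X_pow_succ_dvd_one_add_pow_sub (by omega) (dvd_refl _) n
  have hquad : X ^ (q + k + 1) ∣ (n : R⟦X⟧) * X ^ (q + q + k) :=
    dvd_mul_of_dvd_right (pow_dvd_pow X (by omega)) _
  have hn' : (n : R⟦X⟧) = q * C c := by rw [← map_natCast C, hn, map_mul, map_natCast C]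
  have hwq' : X ^ (q + k + 1) ∣ X ^ q * (w ^ q - (1 + (q : R⟦X⟧) * (C c * X ^ k))) := by
    rw [add_assoc, pow_add]
    exact mul_dvd_mul_left _ hwq
  have h := dvd_sub (dvd_sub hwq' (hlin.mul_left (1 + X ^ q))) hquad
  convert h using 1
  rw [mul_pow]
  linear_combination (-X ^ (q + k) : R⟦X⟧) * hn'

end PowerSeriesCongruences

theorem X_pow_succ_dvd_sub_one_add_X_pow_pow {p j : ℕ} [NeZero p] (hj : 0 < j)
    {f : (ZMod p)⟦X⟧} (hf : X ^ j ∣ f - 1) : X ^ (j + 1) ∣ f - (1 + X ^ j) ^ (coeff j f).val := by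
  have hf1 := X_pow_succ_dvd_sub_C_coeff_mul_X_pow hf
  rw [map_sub, coeff_one, if_neg hj.ne', sub_zero, sub_sub] at hf1
  have hE := X_pow_succ_dvd_one_add_pow_sub hj (dvd_refl (X ^ j : (ZMod p)⟦X⟧)) (coeff j f).val
  rw [← map_natCast C, ZMod.natCast_zmod_val] at hE
  have h := dvd_sub hf1 hE
  rwa [sub_sub_sub_cancel_right] at h

instance {R : Type*} [CommSemiring R] (p : ℕ) [CharP R p] : CharP R⟦X⟧ p :=
  charP_of_injective_algebraMap C_injective p

theorem mem_Ugrp {p k : ℕ} {u : (ZMod p)⟦X⟧ˣ} :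
    u ∈ Ugrp p k ↔ X ^ k ∣ (u : (ZMod p)⟦X⟧) - 1 :=
  Iff.rfl

theorem Ugrp_antitone {p k n : ℕ} (hkn : k ≤ n) : Ugrp p n ≤ Ugrp p k :=
  fun _ hu => (pow_dvd_pow X hkn).trans hu

theorem mul_inv_mem_Ugrp_of_dvd_sub {p n : ℕ} {a b : (ZMod p)⟦X⟧ˣ}
    (h : X ^ n ∣ (a : (ZMod p)⟦X⟧) - (b : (ZMod p)⟦X⟧)) : a * b⁻¹ ∈ Ugrp p n := by
  have e : ((a * b⁻¹ : (ZMod p)⟦X⟧ˣ) : (ZMod p)⟦X⟧) - 1 = (a - b) * ↑b⁻¹ := by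
    rw [Units.val_mul, sub_mul, Units.mul_inv]
  rw [mem_Ugrp, e]
  exact h.mul_right _

section Eu

variable {p : ℕ} [Fact p.Prime]

theorem coe_Eu (j : ℕ) (hj : 0 < j) :
    ((Eu p j hj : (ZMod p)⟦X⟧ˣ) : (ZMod p)⟦X⟧) = 1 + X ^ j :=
  rfl

theorem Eu_char_mul_eq_pow {a : ℕ} (ha : 0 < a) (hpa : 0 < p * a) :
    Eu p (p * a) hpa = Eu p a ha ^ p := by
  ext
  simp only [coe_Eu, SubgroupClass.coe_pow, Units.val_pow_eq_pow_val, add_pow_char, one_pow,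
    ← pow_mul, mul_comm a p]

end Eu

theorem natCast_zmod_ne_zero {p n : ℕ} (h0 : 0 < n) (hn : n < p) : (n : ZMod p) ≠ 0 :=
  (ZMod.natCast_eq_zero_iff n p).not.mpr (Nat.not_dvd_of_pos_of_lt h0 hn)

theorem castHom_eq_zero_of_dvd {p : ℕ} {x : ZMod (p ^ 2)} (h : (p : ZMod (p ^ 2)) ∣ x) :
    ZMod.castHom (dvd_pow_self p two_ne_zero) (ZMod p) x = 0 := by
  obtain ⟨y, rfl⟩ := h
  simp

namespace IsHom

variable {p : ℕ} {χ : Ugrp p 1 → ZMod (p ^ 2)}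

theorem map_one (hχ : IsHom p χ) : χ 1 = 0 := by
  simpa using hχ 1 1

theorem map_pow_s14 (hχ : IsHom p χ) (u : Ugrp p 1) (n : ℕ) : χ (u ^ n) = n * χ u := by
  induction n with
  | zero => simp [hχ.map_one]
  | succ n ih => rw [pow_succ u n, hχ, ih]; push_cast; ring

theorem map_eq_map_mul_inv_add (hχ : IsHom p χ) (a b : Ugrp p 1) :
    χ a = χ (a * b⁻¹) + χ b := by
  rw [← hχ, inv_mul_cancel_right]

theorem p_dvd_map_Eu_of_ne [Fact p.Prime] {l m : ℕ} (hχ : IsHom p χ)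
    (hred1 : ∀ i (hi : 0 < i), ¬ p ∣ i → i ≠ l → (i < m - l ∨ m < i) → χ (Eu p i hi) = 0)
    (hred2 : ∀ i (hi : 0 < i), ¬ p ∣ i → m - l ≤ i → i ≤ m →
      (p : ZMod (p ^ 2)) ∣ χ (Eu p i hi))
    {j : ℕ} (hj : 0 < j) (hjl : j ≠ l) : (p : ZMod (p ^ 2)) ∣ χ (Eu p j hj) := by
  by_cases hpj : p ∣ j
  · obtain ⟨a, rfl⟩ := hpj
    rw [Eu_char_mul_eq_pow (Nat.pos_of_mul_pos_left hj), hχ.map_pow_s14]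
    exact dvd_mul_right _ _
  · by_cases hmid : m - l ≤ j ∧ j ≤ m
    · exact hred2 j hj hpj hmid.1 hmid.2
    · rw [hred1 j hj hpj hjl (by omega)]
      exact dvd_zero _

theorem dvd_map_of_mem_Ugrp [Fact p.Prime] (hχ : IsHom p χ) (hcont : IsCont p χ) {l : ℕ}
    {d : ZMod (p ^ 2)} (hE : ∀ j (hj : 0 < j), l < j → d ∣ χ (Eu p j hj))
    {u : Ugrp p 1} (hu : (u : (ZMod p)⟦X⟧ˣ) ∈ Ugrp p (l + 1)) : d ∣ χ u := by
  obtain ⟨N, hN⟩ := hcont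
  -- descending induction on the level `j`, from the level `N` at which `χ` vanishes
  suffices h : ∀ e j (u : Ugrp p 1), l < j → N ≤ j + e →
      (u : (ZMod p)⟦X⟧ˣ) ∈ Ugrp p j → d ∣ χ u from h N (l + 1) u (by omega) (by omega) hu
  intro e
  induction e with
  | zero =>
    intro j u _ hNj hu
    rw [hN u (Ugrp_antitone hNj hu)]
    exact dvd_zero d
  | succ e ih =>
    intro j u hlj hNj hu
    have hj : 0 < j := by omega
    set g := Eu p j hj ^ (coeff j ((u : (ZMod p)⟦X⟧ˣ) : (ZMod p)⟦X⟧)).val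
    have hug : ((u * g⁻¹ : Ugrp p 1) : (ZMod p)⟦X⟧ˣ) ∈ Ugrp p (j + 1) :=
      mul_inv_mem_Ugrp_of_dvd_sub (by
        simpa only [g, SubgroupClass.coe_pow, Units.val_pow_eq_pow_val, coe_Eu]
          using X_pow_succ_dvd_sub_one_add_X_pow_pow hj hu)
    rw [hχ.map_eq_map_mul_inv_add u g, hχ.map_pow_s14]
    exact dvd_add (ih (j + 1) _ (by omega) (by omega) hug) (dvd_mul_of_dvd_right (hE j hj hlj) _)

end IsHom

theorem reduced_form_obstruction_general (p : ℕ) [Fact p.Prime] (l m : ℕ) (hl : 0 < l) (hlp : l < p)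
    (χ : Ugrp p 1 → ZMod (p ^ 2)) (hhom : IsHom p χ) (hcont : IsCont p χ)
    (hred1 : ∀ i (hi : 0 < i), ¬ p ∣ i → i ≠ l → (i < m - l ∨ m < i) → χ (Eu p i hi) = 0)
    (hred2 : ∀ i (hi : 0 < i), ¬ p ∣ i → m - l ≤ i → i ≤ m →
      (p : ZMod (p ^ 2)) ∣ χ (Eu p i hi))
    (xl : ℕ) (hxl1 : xl < p) (hxl2 : xl ≠ 0) (hxl : χ (Eu p l hl) = (xl : ZMod (p ^ 2)))
    (w : PowerSeries (ZMod p)) (hw : constantCoeff w = 1)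
    (kt : ℕ) (hk1 : 0 < kt) (hk2 : kt < l) (hkc : coeff kt w ≠ 0)
    (hmin : ∀ i, 0 < i → i < kt → coeff i w = 0) :
    ∀ v : Ugrp p 1,
      ((v : (PowerSeries (ZMod p))ˣ) : PowerSeries (ZMod p)) = 1 + (X * w) ^ (l - kt) →
      ZMod.castHom (dvd_pow_self p two_ne_zero) (ZMod p) (χ v)
          = coeff kt w * ((l - kt : ℕ) : ZMod p) * (xl : ZMod p) ∧
        ZMod.castHom (dvd_pow_self p two_ne_zero) (ZMod p) (χ v) ≠ 0 := by
  intro v hv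
  set q := l - kt
  set n := ((q : ZMod p) * coeff kt w).val
  have hq : 0 < q := by omega
  have hcong : X ^ (l + 1) ∣ ((v : (ZMod p)⟦X⟧ˣ) : (ZMod p)⟦X⟧) -
      (((Eu p q hq * Eu p l hl ^ n : Ugrp p 1) : (ZMod p)⟦X⟧ˣ) : (ZMod p)⟦X⟧) := by
    have h := X_pow_dvd_one_add_X_mul_pow_sub hk1 hq (X_pow_dvd_sub_one hw hmin)
      (ZMod.natCast_zmod_val _)
    rw [show q + kt = l by omega] at h
    simpa only [hv, Subgroup.coe_mul, SubgroupClass.coe_pow, Units.val_mul,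
      Units.val_pow_eq_pow_val, coe_Eu] using h
  have hE : ∀ j (hj : 0 < j), j ≠ l → (p : ZMod (p ^ 2)) ∣ χ (Eu p j hj) :=
    fun j hj => hhom.p_dvd_map_Eu_of_ne hred1 hred2 hj
  have hrest := hhom.dvd_map_of_mem_Ugrp hcont (fun j hj hlj => hE j hj hlj.ne')
    (u := v * (Eu p q hq * Eu p l hl ^ n)⁻¹) (mul_inv_mem_Ugrp_of_dvd_sub hcong)
  have hv : ZMod.castHom (dvd_pow_self p two_ne_zero) (ZMod p) (χ v) = n * xl := by
    rw [hhom.map_eq_map_mul_inv_add v (Eu p q hq * Eu p l hl ^ n), hhom (Eu p q hq),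
      hhom.map_pow_s14, hxl, map_add, map_add, castHom_eq_zero_of_dvd hrest,
      castHom_eq_zero_of_dvd (hE q hq (by omega))]
    simp
  rw [hv, ZMod.natCast_zmod_val]
  exact ⟨by ring, mul_ne_zero (mul_ne_zero (natCast_zmod_ne_zero hq (by omega)) hkc)
    (natCast_zmod_ne_zero (Nat.pos_of_ne_zero hxl2) hxl1)⟩

/-- Key computation in the proof that reduced forms are unique representatives when `l < p`:
if `χ` is in reduced form of type `⟨l, m⟩` with `χ(E_l) = x_l`, and
`u(t) = t·w(t)` with `w = 1 + n_k̃ t^k̃ + ⋯`, `0 < k̃ < l`, `n_k̃ ≠ 0`, then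
`(ᵤχ)(E_{l-k̃}) = χ(1 + u^{l-k̃}) ≡ n_k̃ (l - k̃) x_l ≢ 0 (mod p)`. -/
theorem reduced_form_obstruction (p : ℕ) [Fact p.Prime] (l m : ℕ) (hl : 0 < l) (hlp : l < p)
    (χ : Ugrp p 1 → ZMod (p ^ 2)) (hhom : IsHom p χ) (hcont : IsCont p χ)
    (hb : HasBreaks p χ l m)
    (hred1 : ∀ i (hi : 0 < i), ¬ p ∣ i → i ≠ l → (i < m - l ∨ m < i) → χ (Eu p i hi) = 0)
    (hred2 : ∀ i (hi : 0 < i), ¬ p ∣ i → m - l ≤ i → i ≤ m →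
      (p : ZMod (p ^ 2)) ∣ χ (Eu p i hi))
    (xl : ℕ) (hxl1 : xl < p) (hxl2 : xl ≠ 0) (hxl : χ (Eu p l hl) = (xl : ZMod (p ^ 2)))
    (w : PowerSeries (ZMod p)) (hw : constantCoeff w = 1)
    (kt : ℕ) (hk1 : 0 < kt) (hk2 : kt < l) (hkc : coeff kt w ≠ 0)
    (hmin : ∀ i, 0 < i → i < kt → coeff i w = 0) :
    ∀ v : Ugrp p 1,
      ((v : (PowerSeries (ZMod p))ˣ) : PowerSeries (ZMod p)) = 1 + (X * w) ^ (l - kt) →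
      ZMod.castHom (dvd_pow_self p two_ne_zero) (ZMod p) (χ v)
          = coeff kt w * ((l - kt : ℕ) : ZMod p) * (xl : ZMod p) ∧
        ZMod.castHom (dvd_pow_self p two_ne_zero) (ZMod p) (χ v) ≠ 0 :=
  reduced_form_obstruction_general p l m hl hlp χ hhom hcont hred1 hred2 xl hxl1 hxl2 hxl w hw kt
    hk1 hk2 hkc hmin
end
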